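/- arXiv:1202.6642 — 6 statements merged into one kernel-verified Lean document; each statement's English description precedes it below -/
import Mathlib

section
/- For any connected finite graph G = (V,E), the sum over all vertex covers V₁ ⊆ V (i.e., subsets V₁ such that the induced subgraph on V \ V₁ has no edges) of 2 raised to the number of connected components of the induced subgraph G[V₁] is at most 3 · 2^{|V|−1}. -/
/-!
Write a vertex cover `V₁` together with a `Bool`-labelling of the components of `G[V₁]` as one
map `f : V → Option Bool`, with `none` off `V₁`. Such an `f` is exactly a map that sends every
edge to a compatible pair of values: not both `none`, and equal labels when both are labelled.
Every value is compatible with exactly two values, so if every vertex but a root `v₀` is given a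
neighbour closer to `v₀`, then `f` is determined by `f v₀` (three choices) together with, at each
of the other `|V| - 1` vertices, which of the two values compatible with its neighbour's it takes.
-/

open Classical Finset

/-- `none` marks a vertex outside the cover, `some b` the label of its component. -/
def LabelCompat {β : Type*} : Option β → Option β → Prop
  | none, none => False
  | some a, some b => a = b
  | _, _ => True

instance {β : Type*} [DecidableEq β] : DecidableRel (LabelCompat (β := β)) := fun a b ↦ by
  cases a <;> cases b <;> unfold LabelCompat <;> infer_instance

theorem LabelCompat.isSome_or {β : Type*} {a b : Option β} (h : LabelCompat a b) :
    a.isSome ∨ b.isSome := by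
  cases a <;> cases b <;> simp_all [LabelCompat]

theorem natCard_labelCompat_le (a : Option Bool) : Nat.card {b // LabelCompat a b} ≤ 2 := by
  rw [Nat.card_eq_fintype_card]
  revert a
  decide

namespace SimpleGraph

variable {V β : Type*} {G : SimpleGraph V}

theorem Connected.exists_adj_dist_lt (hG : G.Connected) (v₀ : V) {v : V} (hv : v ≠ v₀) :
    ∃ u, G.Adj u v ∧ G.dist v₀ u < G.dist v₀ v := by
  obtain ⟨p, hp⟩ := exists_walk_of_dist_ne_zero (hG.dist_eq_zero_iff.not.mpr hv)
  cases p with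
  | nil => exact absurd rfl hv
  | @cons _ u _ hadj q =>
    refine ⟨u, hadj.symm, ?_⟩
    rw [dist_comm, dist_comm (u := v₀), ← hp, Walk.length_cons]
    exact Nat.lt_succ_of_le (dist_le q)

theorem Connected.natCard_forall_adj_rel_le [Finite V] {α : Type*} [Finite α]
    (hG : G.Connected) {R : α → α → Prop} {k : ℕ} (hR : ∀ a, Nat.card {b // R a b} ≤ k) :
    Nat.card {f : V → α // ∀ u v, G.Adj u v → R (f u) (f v)} ≤
      Nat.card α * k ^ (Nat.card V - 1) := by
  obtain ⟨v₀⟩ := hG.nonempty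
  choose parent hparent using fun v (hv : v ≠ v₀) ↦ hG.exists_adj_dist_lt v₀ hv
  have code (a : α) : {b // R a b} ↪ Fin k := by
    have := Fintype.ofFinite α
    refine (Function.Embedding.nonempty_of_card_le ?_).some
    simpa [Nat.card_eq_fintype_card] using hR a
  have code_inj {a a' : α} (b : {b // R a b}) (b' : {b // R a' b}) (ha : a = a')
      (h : code a b = code a' b') : b.1 = b'.1 := by
    subst ha
    exact congrArg Subtype.val ((code a).injective h)
  let encode (f : {f : V → α // ∀ u v, G.Adj u v → R (f u) (f v)}) :
      α × ({v // v ≠ v₀} → Fin k) :=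
    (f.1 v₀, fun v ↦ code (f.1 (parent v.1 v.2)) ⟨f.1 v, f.2 _ _ (hparent v.1 v.2).1⟩)
  have encode_injective : encode.Injective := by
    intro f f' hff'
    refine Subtype.ext (funext fun v ↦ ?_)
    induction v using (measure (G.dist v₀)).wf.induction with
    | _ v ih =>
      by_cases hv : v = v₀
      · subst hv
        exact congrArg Prod.fst hff'
      · exact code_inj _ _ (ih _ (hparent v hv).2) (congrFun (congrArg Prod.snd hff') ⟨v, hv⟩)
  have := Fintype.ofFinite V
  calc Nat.card {f : V → α // ∀ u v, G.Adj u v → R (f u) (f v)}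
      ≤ Nat.card (α × ({v // v ≠ v₀} → Fin k)) :=
        Nat.card_le_card_of_injective encode encode_injective
    _ = Nat.card α * k ^ (Nat.card V - 1) := by
      simp [Nat.card_prod, Nat.card_eq_fintype_card, Fintype.card_subtype_compl]

noncomputable def extendLabel (s : Set V) (b : (G.induce s).ConnectedComponent → β) (v : V) :
    Option β :=
  if h : v ∈ s then some (b ((G.induce s).connectedComponentMk ⟨v, h⟩)) else none

theorem isSome_extendLabel_iff {s : Set V} (b : (G.induce s).ConnectedComponent → β) {v : V} :
    (extendLabel s b v).isSome ↔ v ∈ s := by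
  unfold extendLabel
  split_ifs with h <;> simpa

theorem extendLabel_injective (s : Set V) : (extendLabel (G := G) (β := β) s).Injective := by
  intro b b' h
  funext c
  induction c using ConnectedComponent.ind with
  | h v => simpa [extendLabel, v.2] using congrFun h v

theorem labelCompat_extendLabel {s : Set V} (hs : ∀ u v, G.Adj u v → u ∈ s ∨ v ∈ s)
    (b : (G.induce s).ConnectedComponent → β) {u v : V} (huv : G.Adj u v) :
    LabelCompat (extendLabel s b u) (extendLabel s b v) := by
  unfold extendLabel
  by_cases hu : u ∈ s <;> by_cases hv : v ∈ s <;>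
    simp only [hu, hv, dif_pos, dif_neg, not_false_eq_true, LabelCompat]
  · exact congrArg b <| ConnectedComponent.connectedComponentMk_eq_of_adj
      (G := G.induce s) (v := ⟨u, hu⟩) (w := ⟨v, hv⟩) huv
  · exact (hs u v huv).elim hu hv

def IsLabelledCover (G : SimpleGraph V) (f : V → Option β) : Prop :=
  ∀ u v, G.Adj u v → LabelCompat (f u) (f v)

theorem sum_pow_card_connectedComponent_le [Fintype V] [Fintype β] (G : SimpleGraph V) :
    ∑ s ∈ univ.filter (fun s : Finset V ↦ ∀ u v, G.Adj u v → u ∈ s ∨ v ∈ s),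
        Nat.card β ^ Nat.card (G.induce (s : Set V)).ConnectedComponent ≤
      Nat.card {f : V → Option β // G.IsLabelledCover f} := by
  let support (f : V → Option β) : Finset V := univ.filter fun v ↦ (f v).isSome
  have support_extendLabel (s : Finset V) (b : (G.induce (s : Set V)).ConnectedComponent → β) :
      support (extendLabel (s : Set V) b) = s := by
    ext v
    simp [support, isSome_extendLabel_iff]
  rw [Nat.card_eq_fintype_card (α := {f // G.IsLabelledCover f}), Fintype.card_subtype,
    card_eq_sum_card_fiberwise (f := support)]
  · refine sum_le_sum fun s hs ↦ ?_
    rw [mem_filter] at hs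
    calc Nat.card β ^ Nat.card (G.induce (s : Set V)).ConnectedComponent
        = Nat.card ((G.induce (s : Set V)).ConnectedComponent → β) := by simp
      _ ≤ Nat.card {f : V → Option β // G.IsLabelledCover f ∧ support f = s} :=
        Nat.card_le_card_of_injective
          (fun b ↦ ⟨extendLabel (s : Set V) b, fun u v ↦ labelCompat_extendLabel hs.2 b,
            support_extendLabel s b⟩)
          fun b b' h ↦ extendLabel_injective _ (congrArg Subtype.val h)
      _ = _ := by rw [Nat.card_eq_fintype_card, Fintype.card_subtype, filter_filter]
  · intro f hf
    simp only [support, coe_filter, mem_filter, mem_univ, true_and, Set.mem_ofPred_eq] at hf ⊢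
    exact fun u v huv ↦ (hf u v huv).isSome_or

end SimpleGraph

/-- Lemma 3 (combinatorial bound): for any connected finite graph `G`, the sum over
all vertex covers `V₁` of `2 ^ (number of connected components of G[V₁])` is at most
`3 · 2 ^ (|V| - 1)`. -/
theorem stmt0 {V : Type*} [Fintype V] (G : SimpleGraph V) (hG : G.Connected) :
    ∑ V₁ ∈ Finset.univ.filter
        (fun V₁ : Finset V => ∀ u v : V, G.Adj u v → u ∈ V₁ ∨ v ∈ V₁),
      2 ^ Nat.card (G.induce (↑V₁ : Set V)).ConnectedComponent
      ≤ 3 * 2 ^ (Fintype.card V - 1) := by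
  calc _ ≤ Nat.card {f : V → Option Bool // G.IsLabelledCover f} := by
        simpa using G.sum_pow_card_connectedComponent_le (β := Bool)
    _ ≤ Nat.card (Option Bool) * 2 ^ (Nat.card V - 1) :=
        hG.natCard_forall_adj_rel_le natCard_labelCompat_le
    _ = 3 * 2 ^ (Fintype.card V - 1) := by simp
end

section
/- Let G be a connected finite graph and T a depth-first search spanning tree of G rooted at some vertex r. Then the set X of internal (non-leaf) nodes of T is a vertex cover of G, and the induced subgraph G[X] is connected (when |V(G)| ≥ 2). -/
/-!
Every edge of `G` joins a vertex to a proper ancestor, and a proper ancestor has a child on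
the way down, so it is internal: this gives the vertex cover. The parent of a non-root
vertex is internal and adjacent to it, so walking up the parent pointers from an internal
node stays inside `G[X]` and reaches the root, which is internal because some other vertex
lies below it.
-/

namespace ParentTree

open SimpleGraph Relation

variable {V : Type*} (p : V → V)

def internalNodes : Set V := {x | ∃ w, w ≠ x ∧ p w = x}

variable {p}

theorem eq_of_reflTransGen_of_apply_eq_self {x y : V} (hx : p x = x)
    (h : ReflTransGen (fun a b => b = p a) x y) : y = x := by
  induction h with
  | refl => rfl
  | tail _ hstep ih => rw [hstep, ih, hx]

theorem mem_internalNodes_of_reflTransGen {a b : V}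
    (h : ReflTransGen (fun x y => y = p x) a b) (hne : a ≠ b) : b ∈ internalNodes p := by
  induction h with
  | refl => exact absurd rfl hne
  | @tail y z _ hstep ih =>
    by_cases hyz : y = z
    · subst hyz
      exact ih hne
    · exact ⟨y, hyz, hstep.symm⟩

theorem root_mem_internalNodes [Nontrivial V] {r : V}
    (hreach : ∀ w, ReflTransGen (fun a b => b = p a) w r) : r ∈ internalNodes p :=
  let ⟨w, hw⟩ := exists_ne r
  mem_internalNodes_of_reflTransGen (hreach w) hw

theorem apply_mem_internalNodes {r x : V} (hreach : ReflTransGen (fun a b => b = p a) x r)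
    (hx : x ≠ r) : p x ∈ internalNodes p :=
  ⟨x, fun hpx => hx (eq_of_reflTransGen_of_apply_eq_self hpx.symm hreach).symm, rfl⟩

theorem mem_internalNodes_or_mem_of_adj {G : SimpleGraph V}
    (hdfs : ∀ a b, G.Adj a b →
      ReflTransGen (fun x y => y = p x) a b ∨ ReflTransGen (fun x y => y = p x) b a)
    {a b : V} (hab : G.Adj a b) : a ∈ internalNodes p ∨ b ∈ internalNodes p :=
  (hdfs a b hab).elim (fun h => .inr (mem_internalNodes_of_reflTransGen h hab.ne))
    (fun h => .inl (mem_internalNodes_of_reflTransGen h hab.ne'))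

variable {G : SimpleGraph V} {r : V}

theorem induce_internalNodes_reachable_root (htree : ∀ w, w ≠ r → G.Adj w (p w))
    (hrX : r ∈ internalNodes p) {x : V} (hreach : ReflTransGen (fun a b => b = p a) x r)
    (hx : x ∈ internalNodes p) :
    (G.induce (internalNodes p)).Reachable ⟨x, hx⟩ ⟨r, hrX⟩ := by
  induction hreach using ReflTransGen.head_induction_on with
  | refl => rfl
  | @head a c hstep htail ih =>
    by_cases har : a = r
    · subst har
      rfl
    · subst hstep
      have hpa := apply_mem_internalNodes (.head rfl htail) har
      have hadj : (G.induce (internalNodes p)).Adj ⟨a, hx⟩ ⟨p a, hpa⟩ := by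
        simpa using htree a har
      exact hadj.reachable.trans (ih hpa)

theorem induce_internalNodes_connected [Nontrivial V] (htree : ∀ w, w ≠ r → G.Adj w (p w))
    (hreach : ∀ w, ReflTransGen (fun a b => b = p a) w r) :
    (G.induce (internalNodes p)).Connected := by
  have hrX := root_mem_internalNodes hreach
  have toRoot := fun (x : internalNodes p) =>
    induce_internalNodes_reachable_root htree hrX (hreach x) x.2
  exact (connected_iff _).2 ⟨fun x y => (toRoot x).trans (toRoot y).symm, ⟨⟨r, hrX⟩⟩⟩

end ParentTree

open ParentTree in
theorem stmt8_general {V : Type*} [Fintype V] (G : SimpleGraph V)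
    (hcard : 2 ≤ Fintype.card V)
    (p : V → V) (r : V)
    (htree : ∀ w : V, w ≠ r → G.Adj w (p w))
    (hreach : ∀ w : V, Relation.ReflTransGen (fun a b => b = p a) w r)
    (hdfs : ∀ a b : V, G.Adj a b →
      Relation.ReflTransGen (fun x y => y = p x) a b ∨
      Relation.ReflTransGen (fun x y => y = p x) b a) :
    (∀ a b : V, G.Adj a b →
        a ∈ {x : V | ∃ w : V, w ≠ x ∧ p w = x} ∨
        b ∈ {x : V | ∃ w : V, w ≠ x ∧ p w = x}) ∧
    (G.induce {x : V | ∃ w : V, w ≠ x ∧ p w = x}).Connected := by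
  have : Nontrivial V := Fintype.one_lt_card_iff_nontrivial.1 hcard
  exact ⟨fun _ _ => mem_internalNodes_or_mem_of_adj hdfs,
    induce_internalNodes_connected htree hreach⟩

/-- Let `G` be a connected finite graph with at least two vertices and let `p, r`
describe a DFS spanning tree of `G`: `p` is the parent function, `r` the root (with
`p r = r`), every non-root vertex is adjacent to its parent, every vertex reaches the
root along parent pointers, and every edge of `G` joins an ancestor–descendant pair.
Then the set `X` of internal nodes of the tree is a vertex cover of `G`, and `G[X]` is
connected. -/
theorem stmt8 {V : Type*} [Fintype V] (G : SimpleGraph V) (hG : G.Connected)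
    (hcard : 2 ≤ Fintype.card V)
    (p : V → V) (r : V) (hr : p r = r)
    (htree : ∀ w : V, w ≠ r → G.Adj w (p w))
    (hreach : ∀ w : V, Relation.ReflTransGen (fun a b => b = p a) w r)
    (hdfs : ∀ a b : V, G.Adj a b →
      Relation.ReflTransGen (fun x y => y = p x) a b ∨
      Relation.ReflTransGen (fun x y => y = p x) b a) :
    (∀ a b : V, G.Adj a b →
        a ∈ {x : V | ∃ w : V, w ≠ x ∧ p w = x} ∨
        b ∈ {x : V | ∃ w : V, w ≠ x ∧ p w = x}) ∧
    (G.induce {x : V | ∃ w : V, w ≠ x ∧ p w = x}).Connected :=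
  stmt8_general G hcard p r htree hreach hdfs
end

section
/- Let G be a connected finite graph and T a depth-first search spanning tree of G. Then the set of internal nodes of T is a connected vertex cover of G whose cardinality is at most twice the cardinality of any vertex cover of G; in particular at most twice the minimum connected vertex cover. -/
/-!
Every non-root vertex of the tree has an internal parent, so the internal nodes contain all
strict ancestors; as every edge of `G` joins an ancestor to a descendant, its upper end is
internal, and climbing through parents links each internal node to the root inside the internal
nodes. For the bound, an internal node `x` has a child `w`, and a vertex cover `C` contains `x`
or `w`: the internal nodes lie in `C ∪ p '' C`, which has at most `2 * |C|` elements.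
-/

open SimpleGraph Relation

theorem Set.ncard_le_two_mul_of_subset_union_image {α : Type*} [Finite α] {S C : Set α}
    {f : α → α} (h : S ⊆ C ∪ f '' C) : S.ncard ≤ 2 * C.ncard :=
  calc S.ncard ≤ (C ∪ f '' C).ncard := Set.ncard_le_ncard h
    _ ≤ C.ncard + (f '' C).ncard := Set.ncard_union_le _ _
    _ ≤ 2 * C.ncard := by linarith [Set.ncard_image_le (f := f) C.toFinite]

namespace ParentMap

variable {V : Type*} {p : V → V}

def internalNodes (p : V → V) : Set V := {x | ∃ w, w ≠ x ∧ p w = x}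

theorem mem_internalNodes_of_reflTransGen {a b : V}
    (h : ReflTransGen (fun x y => y = p x) a b) (hab : a ≠ b) : b ∈ internalNodes p := by
  induction h with
  | refl => exact absurd rfl hab
  | @tail c d _ hdc ih =>
    by_cases hcd : c = d
    · exact hcd ▸ ih (fun hac => hab (hac.trans hcd))
    · exact ⟨c, hcd, hdc.symm⟩

theorem root_mem_internalNodes [Nontrivial V] {r : V}
    (hreach : ∀ w, ReflTransGen (fun a b => b = p a) w r) : r ∈ internalNodes p :=
  let ⟨w, hw⟩ := exists_ne r
  mem_internalNodes_of_reflTransGen (hreach w) hw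

variable {G : SimpleGraph V} {r : V}

theorem isVertexCover_internalNodes
    (hdfs : ∀ a b, G.Adj a b →
      ReflTransGen (fun x y => y = p x) a b ∨ ReflTransGen (fun x y => y = p x) b a) :
    G.IsVertexCover (internalNodes p) := fun a b hab =>
  (hdfs a b hab).elim (fun h => .inr (mem_internalNodes_of_reflTransGen h hab.ne))
    (fun h => .inl (mem_internalNodes_of_reflTransGen h hab.ne'))

theorem eq_root_of_map_eq_self (htree : ∀ w, w ≠ r → G.Adj w (p w)) {w : V} (hw : p w = w) :
    w = r := by
  by_contra hwr
  exact G.irrefl (hw ▸ htree w hwr)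

theorem induce_internalNodes_reachable_root (htree : ∀ w, w ≠ r → G.Adj w (p w))
    (hreach : ∀ w, ReflTransGen (fun a b => b = p a) w r) (hr : r ∈ internalNodes p)
    {x : V} (hx : x ∈ internalNodes p) :
    (G.induce (internalNodes p)).Reachable ⟨x, hx⟩ ⟨r, hr⟩ := by
  induction hreach x using ReflTransGen.head_induction_on with
  | refl => rfl
  | @head a c hca _ ih =>
    by_cases har : a = r
    · subst har; rfl
    · have hac : a ≠ c := fun hac => har (eq_root_of_map_eq_self htree (hca ▸ hac).symm)
      have hc : c ∈ internalNodes p := ⟨a, hac, hca.symm⟩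
      have hadj : (G.induce (internalNodes p)).Adj ⟨a, hx⟩ ⟨c, hc⟩ := by
        simpa [hca] using htree a har
      exact hadj.reachable.trans (ih hc)

theorem induce_internalNodes_connected (htree : ∀ w, w ≠ r → G.Adj w (p w))
    (hreach : ∀ w, ReflTransGen (fun a b => b = p a) w r) (hr : r ∈ internalNodes p) :
    (G.induce (internalNodes p)).Connected :=
  (connected_iff _).2
    ⟨fun x y => (induce_internalNodes_reachable_root htree hreach hr x.2).trans
      (induce_internalNodes_reachable_root htree hreach hr y.2).symm, ⟨⟨r, hr⟩⟩⟩

theorem internalNodes_subset_union_image (hroot : p r = r)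
    (htree : ∀ w, w ≠ r → G.Adj w (p w)) {C : Set V} (hC : G.IsVertexCover C) :
    internalNodes p ⊆ C ∪ p '' C := by
  rintro x ⟨w, hwx, rfl⟩
  have hwr : w ≠ r := by rintro rfl; exact hwx hroot.symm
  rcases hC (htree w hwr) with hw | hpw
  · exact .inr ⟨w, hw, rfl⟩
  · exact .inl hpw

end ParentMap

open ParentMap in
theorem stmt10_general {V : Type*} [Fintype V] (G : SimpleGraph V)
    (hcard : 2 ≤ Fintype.card V)
    (p : V → V) (r : V) (hr : p r = r)
    (htree : ∀ w : V, w ≠ r → G.Adj w (p w))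
    (hreach : ∀ w : V, Relation.ReflTransGen (fun a b => b = p a) w r)
    (hdfs : ∀ a b : V, G.Adj a b →
      Relation.ReflTransGen (fun x y => y = p x) a b ∨
      Relation.ReflTransGen (fun x y => y = p x) b a) :
    (∀ a b : V, G.Adj a b →
        a ∈ {x : V | ∃ w : V, w ≠ x ∧ p w = x} ∨
        b ∈ {x : V | ∃ w : V, w ≠ x ∧ p w = x}) ∧
    (G.induce {x : V | ∃ w : V, w ≠ x ∧ p w = x}).Connected ∧
    (∀ C : Set V, (∀ a b : V, G.Adj a b → a ∈ C ∨ b ∈ C) →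
      ({x : V | ∃ w : V, w ≠ x ∧ p w = x}).ncard ≤ 2 * C.ncard) := by
  have : Nontrivial V := Fintype.one_lt_card_iff_nontrivial.1 hcard
  have hrI : r ∈ internalNodes p := root_mem_internalNodes hreach
  refine ⟨fun a b hab => isVertexCover_internalNodes hdfs hab,
    induce_internalNodes_connected htree hreach hrI, fun C hC => ?_⟩
  exact Set.ncard_le_two_mul_of_subset_union_image
    (internalNodes_subset_union_image hr htree fun a b hab => hC a b hab)

/-- Guha–Khuller `2`-approximation: the set of internal nodes of a DFS spanning tree of
a connected graph `G` (with at least two vertices) is a connected vertex cover of `G`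
of cardinality at most twice the cardinality of any vertex cover of `G`. -/
theorem stmt10 {V : Type*} [Fintype V] (G : SimpleGraph V) (hG : G.Connected)
    (hcard : 2 ≤ Fintype.card V)
    (p : V → V) (r : V) (hr : p r = r)
    (htree : ∀ w : V, w ≠ r → G.Adj w (p w))
    (hreach : ∀ w : V, Relation.ReflTransGen (fun a b => b = p a) w r)
    (hdfs : ∀ a b : V, G.Adj a b →
      Relation.ReflTransGen (fun x y => y = p x) a b ∨
      Relation.ReflTransGen (fun x y => y = p x) b a) :
    (∀ a b : V, G.Adj a b →
        a ∈ {x : V | ∃ w : V, w ≠ x ∧ p w = x} ∨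
        b ∈ {x : V | ∃ w : V, w ≠ x ∧ p w = x}) ∧
    (G.induce {x : V | ∃ w : V, w ≠ x ∧ p w = x}).Connected ∧
    (∀ C : Set V, (∀ a b : V, G.Adj a b → a ∈ C ∨ b ∈ C) →
      ({x : V | ∃ w : V, w ≠ x ∧ p w = x}).ncard ≤ 2 * C.ncard) :=
  stmt10_general G hcard p r hr htree hreach hdfs
end

section
/- Let G be a graph, Z a vertex cover of G, Z₁ ⊆ Z with Z \ Z₁ independent, and V₁ the set of vertices in V(G) \ Z having a neighbor in Z \ Z₁. If additionally every vertex of V₁ has a neighbor in Z₁, then Z₁ ∪ V₁ is a vertex cover of G. -/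
namespace SimpleGraph

variable {V : Type*} {G : SimpleGraph V} {Z Z₁ : Set V}

theorem Adj.mem_or_mem_setOf_of_mem_sdiff (hZ₀ind : ∀ a ∈ Z \ Z₁, ∀ b ∈ Z \ Z₁, ¬ G.Adj a b)
    {u v : V} (huv : G.Adj u v) (hu : u ∈ Z \ Z₁) :
    v ∈ Z₁ ∨ v ∈ {w : V | w ∉ Z ∧ ∃ z ∈ Z \ Z₁, G.Adj w z} := by
  by_cases hv : v ∈ Z₁
  · exact Or.inl hv
  · exact Or.inr ⟨fun hvZ => hZ₀ind u hu v ⟨hvZ, hv⟩ huv, u, hu, huv.symm⟩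

theorem Adj.mem_union_or_mem_union_of_mem (hZ₀ind : ∀ a ∈ Z \ Z₁, ∀ b ∈ Z \ Z₁, ¬ G.Adj a b)
    {u v : V} (huv : G.Adj u v) (hu : u ∈ Z) :
    u ∈ Z₁ ∪ {w : V | w ∉ Z ∧ ∃ z ∈ Z \ Z₁, G.Adj w z} ∨
      v ∈ Z₁ ∪ {w : V | w ∉ Z ∧ ∃ z ∈ Z \ Z₁, G.Adj w z} := by
  by_cases hu₁ : u ∈ Z₁
  · exact Or.inl (Or.inl hu₁)
  · exact Or.inr (huv.mem_or_mem_setOf_of_mem_sdiff hZ₀ind ⟨hu, hu₁⟩)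

end SimpleGraph

theorem stmt15_general {V : Type*} (G : SimpleGraph V) (Z Z₁ : Set V)
    (hZ : ∀ u v : V, G.Adj u v → u ∈ Z ∨ v ∈ Z)
    (hZ₀ind : ∀ a ∈ Z \ Z₁, ∀ b ∈ Z \ Z₁, ¬ G.Adj a b)
    (V₁ : Set V) (hV₁ : V₁ = {w : V | w ∉ Z ∧ ∃ z ∈ Z \ Z₁, G.Adj w z}) :
    ∀ u v : V, G.Adj u v → u ∈ Z₁ ∪ V₁ ∨ v ∈ Z₁ ∪ V₁ := by
  subst hV₁
  intro u v huv
  rcases hZ u v huv with hu | hv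
  · exact huv.mem_union_or_mem_union_of_mem hZ₀ind hu
  · exact (huv.symm.mem_union_or_mem_union_of_mem hZ₀ind hv).symm

/-- If `Z` is a vertex cover of `G`, `Z₁ ⊆ Z` with `Z₀ = Z \ Z₁` independent, `V₁` is
the set of vertices outside `Z` having a neighbour in `Z₀`, and every vertex of `V₁`
has a neighbour in `Z₁`, then `Z₁ ∪ V₁` is a vertex cover of `G`. -/
theorem stmt15 {V : Type*} (G : SimpleGraph V) (Z Z₁ : Set V) (hZ₁ : Z₁ ⊆ Z)
    (hZ : ∀ u v : V, G.Adj u v → u ∈ Z ∨ v ∈ Z)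
    (hZ₀ind : ∀ a ∈ Z \ Z₁, ∀ b ∈ Z \ Z₁, ¬ G.Adj a b)
    (V₁ : Set V) (hV₁ : V₁ = {w : V | w ∉ Z ∧ ∃ z ∈ Z \ Z₁, G.Adj w z})
    (hV₁Z₁ : ∀ w ∈ V₁, ∃ z ∈ Z₁, G.Adj w z) :
    ∀ u v : V, G.Adj u v → u ∈ Z₁ ∪ V₁ ∨ v ∈ Z₁ ∪ V₁ :=
  stmt15_general G Z Z₁ hZ hZ₀ind V₁ hV₁
end

section
/- Let G be a finite graph with vertex set V, and let f : S → {ii, io, o}^V where S is the set of pairs (V₁, C) with V₁ a vertex cover and C ⊆ cc(G[V₁]). Fix a spanning tree T of G rooted at r. Then the map φ' sending (V₁,C) to the pair consisting of the {ii,io,o}-label of r together with a function V \ {r} → {a,b} (defined top-down: if the parent p of v is in V₁ then label v by 'a' iff v ∈ V₁; if p ∉ V₁ then v ∈ V₁ and label v by 'a' iff the component of v belongs to C) is injective. Consequently |S| ≤ 3 · 2^{|V|−1}. -/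
/-!
Both labellings are decoded from the root downwards along the tree. Whether the parent `p v`
lies in `V₁` is known by the time `v` is reached: if it does, the label of `v` records
`v ∈ V₁`, and the component of `v` is that of `p v`; if it does not, then `v ∈ V₁` because
the tree edge between `v` and `p v` is covered, and the label records whether the component
of `v` lies in `C`. So `V₁` and then `C` are recovered, and the labels take at most
`3 · 2 ^ (|V| - 1)` values.
-/

open Classical

/-- The three labels `ii`, `io`, `o` used for the root. -/
inductive Lab : Type
  | ii : Lab
  | io : Lab
  | o : Lab

/-- The two labels `a`, `b` used for the non-root vertices. -/
inductive AB : Type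
  | a : AB
  | b : AB

def Lab.equivFin : Lab ≃ Fin 3 where
  toFun x := match x with | .ii => 0 | .io => 1 | .o => 2
  invFun n := match n with | 0 => .ii | 1 => .io | _ => .o
  left_inv x := by cases x <;> rfl
  right_inv n := by fin_cases n <;> rfl

def AB.equivFin : AB ≃ Fin 2 where
  toFun x := match x with | .a => 0 | .b => 1
  invFun n := match n with | 0 => .a | _ => .b
  left_inv x := by cases x <;> rfl
  right_inv n := by fin_cases n <;> rfl

instance : Finite Lab := .of_equiv _ Lab.equivFin.symm

instance : Finite AB := .of_equiv _ AB.equivFin.symm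

theorem Relation.ReflTransGen.parent_induction {V : Type*} {p : V → V} {r : V} {P : V → Prop}
    (hreach : ∀ w, Relation.ReflTransGen (fun a b => b = p a) w r) (root : P r)
    (step : ∀ w, w ≠ r → P (p w) → P w) (w : V) : P w := by
  induction hreach w using Relation.ReflTransGen.head_induction_on with
  | refl => exact root
  | @head w _ hwc _ ih =>
    subst hwc
    by_cases hw : w = r
    · exact hw ▸ root
    · exact step w hw ih

theorem ite_eq_ite_iff_of_ne {α : Type*} {P Q : Prop} [Decidable P] [Decidable Q] {x y : α}
    (hxy : x ≠ y) : (if P then x else y) = (if Q then x else y) ↔ (P ↔ Q) := by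
  by_cases hP : P <;> by_cases hQ : Q <;> simp [hP, hQ, hxy, hxy.symm]

section Labels

variable {V : Type*} (G : SimpleGraph V)

noncomputable def rootLabel (r : V) (V₁ : Set V) (C : Set (G.induce V₁).ConnectedComponent) :
    Lab :=
  if h : r ∈ V₁ then
    (if (G.induce V₁).connectedComponentMk ⟨r, h⟩ ∈ C then Lab.ii else Lab.io)
  else Lab.o

noncomputable def vertexLabel (p : V → V) (V₁ : Set V)
    (C : Set (G.induce V₁).ConnectedComponent) (v : V) : AB :=
  if p v ∈ V₁ then (if v ∈ V₁ then AB.a else AB.b)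
  else if h : v ∈ V₁ then
    (if (G.induce V₁).connectedComponentMk ⟨v, h⟩ ∈ C then AB.a else AB.b)
  else AB.b

variable {G}

theorem mem_iff_of_rootLabel_eq {r : V} {V₁ V₁' : Set V}
    {C : Set (G.induce V₁).ConnectedComponent} {C' : Set (G.induce V₁').ConnectedComponent}
    (h : rootLabel G r V₁ C = rootLabel G r V₁' C') : r ∈ V₁ ↔ r ∈ V₁' := by
  unfold rootLabel at h
  split_ifs at h <;> simp_all

theorem connectedComponentMk_mem_iff_of_rootLabel_eq {r : V} {V₁ : Set V}
    {C C' : Set (G.induce V₁).ConnectedComponent}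
    (h : rootLabel G r V₁ C = rootLabel G r V₁ C') (hr : r ∈ V₁) :
    (G.induce V₁).connectedComponentMk ⟨r, hr⟩ ∈ C ↔
      (G.induce V₁).connectedComponentMk ⟨r, hr⟩ ∈ C' := by
  rw [rootLabel, rootLabel, dif_pos hr, dif_pos hr] at h
  exact (ite_eq_ite_iff_of_ne Lab.noConfusion).1 h

theorem mem_iff_of_vertexLabel_eq {p : V → V} {V₁ V₁' : Set V}
    {C : Set (G.induce V₁).ConnectedComponent} {C' : Set (G.induce V₁').ConnectedComponent}
    {v : V} (hc : v ∈ V₁ ∨ p v ∈ V₁) (hc' : v ∈ V₁' ∨ p v ∈ V₁')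
    (hp : p v ∈ V₁ ↔ p v ∈ V₁') (h : vertexLabel G p V₁ C v = vertexLabel G p V₁' C' v) :
    v ∈ V₁ ↔ v ∈ V₁' := by
  by_cases hpv : p v ∈ V₁
  · rw [vertexLabel, vertexLabel, if_pos hpv, if_pos (hp.1 hpv)] at h
    exact (ite_eq_ite_iff_of_ne AB.noConfusion).1 h
  · exact iff_of_true (hc.resolve_right hpv) (hc'.resolve_right (hp.not.1 hpv))

theorem connectedComponentMk_mem_iff_of_vertexLabel_eq {p : V → V} {V₁ : Set V}
    {C C' : Set (G.induce V₁).ConnectedComponent} {v : V}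
    (h : vertexLabel G p V₁ C v = vertexLabel G p V₁ C' v) (hv : v ∈ V₁) (hpv : p v ∉ V₁) :
    (G.induce V₁).connectedComponentMk ⟨v, hv⟩ ∈ C ↔
      (G.induce V₁).connectedComponentMk ⟨v, hv⟩ ∈ C' := by
  rw [vertexLabel, vertexLabel, if_neg hpv, if_neg hpv, dif_pos hv, dif_pos hv] at h
  exact (ite_eq_ite_iff_of_ne AB.noConfusion).1 h

variable {p : V → V} {r : V} (htree : ∀ w, w ≠ r → G.Adj w (p w))
  (hreach : ∀ w, Relation.ReflTransGen (fun a b => b = p a) w r)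
include htree hreach

theorem eq_of_labels_eq {V₁ V₁' : Set V}
    (hc : ∀ u v, G.Adj u v → u ∈ V₁ ∨ v ∈ V₁) (hc' : ∀ u v, G.Adj u v → u ∈ V₁' ∨ v ∈ V₁')
    {C : Set (G.induce V₁).ConnectedComponent} {C' : Set (G.induce V₁').ConnectedComponent}
    (hroot : rootLabel G r V₁ C = rootLabel G r V₁' C')
    (hlabel : ∀ v, v ≠ r → vertexLabel G p V₁ C v = vertexLabel G p V₁' C' v) : V₁ = V₁' :=
  Set.ext <| Relation.ReflTransGen.parent_induction hreach (mem_iff_of_rootLabel_eq hroot)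
    fun w hw ih => mem_iff_of_vertexLabel_eq (hc _ _ (htree w hw)) (hc' _ _ (htree w hw)) ih
      (hlabel w hw)

theorem components_eq_of_labels_eq {V₁ : Set V} {C C' : Set (G.induce V₁).ConnectedComponent}
    (hroot : rootLabel G r V₁ C = rootLabel G r V₁ C')
    (hlabel : ∀ v, v ≠ r → vertexLabel G p V₁ C v = vertexLabel G p V₁ C' v) : C = C' := by
  have key : ∀ w (hw : w ∈ V₁), (G.induce V₁).connectedComponentMk ⟨w, hw⟩ ∈ C ↔
      (G.induce V₁).connectedComponentMk ⟨w, hw⟩ ∈ C' := by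
    refine Relation.ReflTransGen.parent_induction hreach
      (connectedComponentMk_mem_iff_of_rootLabel_eq hroot) fun w hw ih hwV => ?_
    by_cases hpw : p w ∈ V₁
    · have hadj : (G.induce V₁).Adj ⟨w, hwV⟩ ⟨p w, hpw⟩ := htree w hw
      rw [SimpleGraph.ConnectedComponent.sound hadj.reachable]
      exact ih hpw
    · exact connectedComponentMk_mem_iff_of_vertexLabel_eq (hlabel w hw) hwV hpw
  ext K
  induction K using SimpleGraph.ConnectedComponent.ind with
  | _ v => exact key v.1 v.2

abbrev CoverWithComponents (G : SimpleGraph V) : Type _ :=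
  Σ V₁ : {S : Set V // ∀ u v, G.Adj u v → u ∈ S ∨ v ∈ S},
    Set (G.induce (V₁ : Set V)).ConnectedComponent

-- The paper's map `φ'`.
variable (G p r) in
noncomputable def coverLabelling (x : CoverWithComponents G) : Lab × ({v : V // v ≠ r} → AB) :=
  (rootLabel G r x.1 x.2, fun v => vertexLabel G p x.1 x.2 v)

theorem coverLabelling_injective : Function.Injective (coverLabelling G p r) := by
  rintro ⟨⟨V₁, hc⟩, C⟩ ⟨⟨V₁', hc'⟩, C'⟩ h
  have hroot := congrArg Prod.fst h
  have hlabel v hv := congrFun (congrArg Prod.snd h) ⟨v, hv⟩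
  obtain rfl := eq_of_labels_eq htree hreach hc hc' hroot hlabel
  obtain rfl := components_eq_of_labels_eq htree hreach hroot hlabel
  rfl

theorem card_coverWithComponents_le [Fintype V] :
    Nat.card (CoverWithComponents G) ≤ 3 * 2 ^ (Fintype.card V - 1) :=
  calc Nat.card (CoverWithComponents G)
      ≤ Nat.card (Lab × ({v : V // v ≠ r} → AB)) :=
        Nat.card_le_card_of_injective _ (coverLabelling_injective htree hreach)
    _ = 3 * 2 ^ (Fintype.card V - 1) := by
      rw [Nat.card_prod, Nat.card_fun, Nat.card_eq_of_equiv_fin Lab.equivFin,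
        Nat.card_eq_of_equiv_fin AB.equivFin, Nat.card_eq_fintype_card,
        Fintype.card_subtype_compl, Fintype.card_subtype_eq]

end Labels

theorem stmt16_general {V : Type*} [Fintype V] (G : SimpleGraph V)
    (p : V → V) (r : V)
    (htree : ∀ w : V, w ≠ r → G.Adj w (p w))
    (hreach : ∀ w : V, Relation.ReflTransGen (fun a b => b = p a) w r) :
    (∀ (V₁ V₁' : Set V)
      (_ : ∀ u v : V, G.Adj u v → u ∈ V₁ ∨ v ∈ V₁)
      (_ : ∀ u v : V, G.Adj u v → u ∈ V₁' ∨ v ∈ V₁')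
      (C : Set (G.induce V₁).ConnectedComponent)
      (C' : Set (G.induce V₁').ConnectedComponent),
      -- the labels of the root agree
      (if h : r ∈ V₁ then
          (if (G.induce V₁).connectedComponentMk ⟨r, h⟩ ∈ C then Lab.ii else Lab.io)
        else Lab.o)
        = (if h : r ∈ V₁' then
          (if (G.induce V₁').connectedComponentMk ⟨r, h⟩ ∈ C' then Lab.ii else Lab.io)
        else Lab.o) →
      -- the `{a,b}`-labellings of the non-root vertices agree
      (fun v : {v : V // v ≠ r} =>
          if p v.1 ∈ V₁ then (if v.1 ∈ V₁ then AB.a else AB.b)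
          else if h : v.1 ∈ V₁ then
            (if (G.induce V₁).connectedComponentMk ⟨v.1, h⟩ ∈ C then AB.a else AB.b)
          else AB.b)
        = (fun v : {v : V // v ≠ r} =>
          if p v.1 ∈ V₁' then (if v.1 ∈ V₁' then AB.a else AB.b)
          else if h : v.1 ∈ V₁' then
            (if (G.induce V₁').connectedComponentMk ⟨v.1, h⟩ ∈ C' then AB.a else AB.b)
          else AB.b) →
      V₁ = V₁' ∧ HEq C C') ∧
    Nat.card (Σ V₁ : {S : Set V // ∀ u v : V, G.Adj u v → u ∈ S ∨ v ∈ S},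
        Set (G.induce (V₁ : Set V)).ConnectedComponent)
      ≤ 3 * 2 ^ (Fintype.card V - 1) := by
  refine ⟨fun V₁ V₁' hc hc' C C' hroot hlabel => ?_, card_coverWithComponents_le htree hreach⟩
  have hlabel' v hv := congrFun hlabel ⟨v, hv⟩
  obtain rfl := eq_of_labels_eq htree hreach hc hc' hroot hlabel'
  exact ⟨rfl, heq_of_eq (components_eq_of_labels_eq htree hreach hroot hlabel')⟩

/-- The refined map `φ'`: fix a spanning tree of the connected graph `G` given by a
parent function `p` with root `r`. A pair `(V₁, C)` (vertex cover plus a set of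
components of `G[V₁]`) is sent to the `{ii,io,o}`-label of the root together with an
`{a,b}`-labelling of `V \ {r}` defined top-down as in the paper. This map is injective;
consequently the number of pairs `(V₁, C)` is at most `3 · 2 ^ (|V| - 1)`. -/
theorem stmt16 {V : Type*} [Fintype V] (G : SimpleGraph V) (hG : G.Connected)
    (p : V → V) (r : V) (hr : p r = r)
    (htree : ∀ w : V, w ≠ r → G.Adj w (p w))
    (hreach : ∀ w : V, Relation.ReflTransGen (fun a b => b = p a) w r) :
    (∀ (V₁ V₁' : Set V)
      (_ : ∀ u v : V, G.Adj u v → u ∈ V₁ ∨ v ∈ V₁)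
      (_ : ∀ u v : V, G.Adj u v → u ∈ V₁' ∨ v ∈ V₁')
      (C : Set (G.induce V₁).ConnectedComponent)
      (C' : Set (G.induce V₁').ConnectedComponent),
      -- the labels of the root agree
      (if h : r ∈ V₁ then
          (if (G.induce V₁).connectedComponentMk ⟨r, h⟩ ∈ C then Lab.ii else Lab.io)
        else Lab.o)
        = (if h : r ∈ V₁' then
          (if (G.induce V₁').connectedComponentMk ⟨r, h⟩ ∈ C' then Lab.ii else Lab.io)
        else Lab.o) →
      -- the `{a,b}`-labellings of the non-root vertices agree
      (fun v : {v : V // v ≠ r} =>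
          if p v.1 ∈ V₁ then (if v.1 ∈ V₁ then AB.a else AB.b)
          else if h : v.1 ∈ V₁ then
            (if (G.induce V₁).connectedComponentMk ⟨v.1, h⟩ ∈ C then AB.a else AB.b)
          else AB.b)
        = (fun v : {v : V // v ≠ r} =>
          if p v.1 ∈ V₁' then (if v.1 ∈ V₁' then AB.a else AB.b)
          else if h : v.1 ∈ V₁' then
            (if (G.induce V₁').connectedComponentMk ⟨v.1, h⟩ ∈ C' then AB.a else AB.b)
          else AB.b) →
      V₁ = V₁' ∧ HEq C C') ∧
    Nat.card (Σ V₁ : {S : Set V // ∀ u v : V, G.Adj u v → u ∈ S ∨ v ∈ S},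
        Set (G.induce (V₁ : Set V)).ConnectedComponent)
      ≤ 3 * 2 ^ (Fintype.card V - 1) :=
  stmt16_general G p r htree hreach
end

section
/- Let G be a graph, X a connected vertex cover of the graph G/e obtained by contracting edge e = uv of G to a vertex x. Then (X \ {x}) ∪ {u, v} is a connected vertex cover of G of size at most |X| + 2, provided u or v has a neighbor in (X \ {x}) ∪ {u,v} or G has at most 2 vertices. -/
/-!
An edge of `G/e` is either an edge of `G` or comes from an edge at `v`, which `G[S]` replaces
by the two-edge path through `v`; hence the images of the vertices of `X` are mutually
reachable in `G[S]`. They also reach `v`: either the merged vertex lies in `X`, or every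
neighbour of it in `G/e` does, and by connectivity of `G` it has such a neighbour whenever `X`
contains a vertex outside `{u, v}`.
-/

/-- The graph obtained from `G` by contracting the edge `uv`: the vertex `v` is removed
and the merged vertex `x` (represented by `u`) takes over all neighbours of `v`. -/
def contractEdge {V : Type*} (G : SimpleGraph V) (u v : V) :
    SimpleGraph {w : V // w ≠ v} :=
  SimpleGraph.fromRel (fun a b =>
    G.Adj a.1 b.1 ∨ (a.1 = u ∧ G.Adj v b.1) ∨ (b.1 = u ∧ G.Adj a.1 v))

namespace SimpleGraph

theorem Reachable.lift {V W : Type*} {G : SimpleGraph V} {H : SimpleGraph W} (f : V → W)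
    (hf : ∀ a b, G.Adj a b → H.Reachable (f a) (f b)) {a b : V} (h : G.Reachable a b) :
    H.Reachable (f a) (f b) := by
  rw [reachable_iff_reflTransGen] at h ⊢
  exact h.lift' f fun a b hab => (reachable_iff_reflTransGen _ _).1 (hf a b hab)

theorem Connected.exists_adj_of_ne {V : Type*} {G : SimpleGraph V} (hG : G.Connected)
    {u v w : V} (hwu : w ≠ u) (hwv : w ≠ v) :
    ∃ t, t ≠ u ∧ t ≠ v ∧ (G.Adj u t ∨ G.Adj v t) := by
  obtain ⟨p⟩ := hG.preconnected u w
  obtain ⟨d, -, hd, hd'⟩ := p.exists_boundary_dart {u, v} (by simp) (by simp [hwu, hwv])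
  simp only [Set.mem_insert_iff, Set.mem_singleton_iff, not_or] at hd hd'
  refine ⟨d.snd, hd'.1, hd'.2, ?_⟩
  rcases hd with h | h
  · exact .inl (h ▸ d.adj)
  · exact .inr (h ▸ d.adj)

end SimpleGraph

open SimpleGraph

section Uncontract

variable {V : Type*} {G : SimpleGraph V} {u v : V} {X : Set {w : V // w ≠ v}}

theorem contractEdge_adj {a b : {w : V // w ≠ v}} :
    (contractEdge G u v).Adj a b ↔
      a ≠ b ∧ (G.Adj a b ∨ (a.1 = u ∧ G.Adj v b) ∨ (b.1 = u ∧ G.Adj a v)) := by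
  simp only [contractEdge, fromRel_adj, G.adj_comm]
  tauto

theorem contractEdge_adj_of_adj {a b : {w : V // w ≠ v}} (h : G.Adj a b) :
    (contractEdge G u v).Adj a b :=
  contractEdge_adj.2 ⟨fun hab => h.ne (congrArg Subtype.val hab), .inl h⟩

theorem contractEdge_adj_merged (huv : u ≠ v) {t : V} (htu : t ≠ u) (htv : t ≠ v)
    (ht : G.Adj u t ∨ G.Adj v t) : (contractEdge G u v).Adj ⟨u, huv⟩ ⟨t, htv⟩ := by
  refine contractEdge_adj.2 ⟨fun h => htu (congrArg Subtype.val h).symm, ?_⟩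
  rcases ht with ht | ht
  · exact .inl ht
  · exact .inr (.inl ⟨rfl, ht⟩)

theorem reachable_induce_of_adj {s : Set V} {a b : V} (ha : a ∈ s) (hb : b ∈ s)
    (h : G.Adj a b) : (G.induce s).Reachable ⟨a, ha⟩ ⟨b, hb⟩ :=
  Adj.reachable h

variable (u v X) in
def uncontract : Set V := (Subtype.val '' X \ {u}) ∪ {u, v}

theorem left_mem_uncontract : u ∈ uncontract u v X := .inr (.inl rfl)

theorem right_mem_uncontract : v ∈ uncontract u v X := .inr (.inr rfl)

theorem val_mem_uncontract {a : {w : V // w ≠ v}} (ha : a ∈ X) : a.1 ∈ uncontract u v X := by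
  by_cases h : a.1 = u
  · exact h ▸ left_mem_uncontract
  · exact .inl ⟨⟨a, ha, rfl⟩, h⟩

theorem ncard_uncontract_le : (uncontract u v X).ncard ≤ X.ncard + 2 :=
  calc (uncontract u v X).ncard
      ≤ (Subtype.val '' X \ {u}).ncard + ({u, v} : Set V).ncard := Set.ncard_union_le _ _
    _ ≤ X.ncard + 2 := by
      gcongr
      · exact (Set.ncard_sdiff_singleton_le _ _).trans
          (Set.ncard_image_of_injective _ Subtype.val_injective).le
      · exact (Set.ncard_insert_le _ _).trans (by simp)

theorem isVertexCover_uncontract (hX : (contractEdge G u v).IsVertexCover X) :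
    G.IsVertexCover (uncontract u v X) := by
  intro a b hab
  by_cases ha : a = v
  · subst ha
    exact .inl right_mem_uncontract
  by_cases hb : b = v
  · subst hb
    exact .inr right_mem_uncontract
  exact (hX (contractEdge_adj_of_adj (a := ⟨a, ha⟩) (b := ⟨b, hb⟩) hab)).imp
    val_mem_uncontract val_mem_uncontract

theorem reachable_uncontract_of_contractEdge_adj (huv : G.Adj u v) {a b : {w : V // w ≠ v}}
    (ha : a ∈ X) (hb : b ∈ X) (hab : (contractEdge G u v).Adj a b) :
    (G.induce (uncontract u v X)).Reachable ⟨a, val_mem_uncontract ha⟩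
      ⟨b, val_mem_uncontract hb⟩ := by
  have hv : v ∈ uncontract u v X := right_mem_uncontract
  rcases (contractEdge_adj.1 hab).2 with h | ⟨hau, hvb⟩ | ⟨hbu, hav⟩
  · exact reachable_induce_of_adj _ _ h
  · exact (reachable_induce_of_adj _ hv (hau ▸ huv)).trans (reachable_induce_of_adj hv _ hvb)
  · exact (reachable_induce_of_adj _ hv hav).trans
      (reachable_induce_of_adj hv _ (hbu ▸ huv.symm))

theorem reachable_uncontract_of_reachable (huv : G.Adj u v) {a b : X}
    (h : ((contractEdge G u v).induce X).Reachable a b) :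
    (G.induce (uncontract u v X)).Reachable ⟨a.1.1, val_mem_uncontract a.2⟩
      ⟨b.1.1, val_mem_uncontract b.2⟩ :=
  h.lift (fun c : X => (⟨c.1.1, val_mem_uncontract c.2⟩ : uncontract u v X))
    fun c d hcd => reachable_uncontract_of_contractEdge_adj huv c.2 d.2 hcd

theorem exists_reachable_right_uncontract (hG : G.Connected) (huv : G.Adj u v)
    (hX : (contractEdge G u v).IsVertexCover X) {a : {w : V // w ≠ v}} (hau : a.1 ≠ u) :
    ∃ b : X, (G.induce (uncontract u v X)).Reachable ⟨b.1, val_mem_uncontract b.2⟩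
      ⟨v, right_mem_uncontract⟩ := by
  by_cases hx : (⟨u, huv.ne⟩ : {w : V // w ≠ v}) ∈ X
  · exact ⟨⟨_, hx⟩, reachable_induce_of_adj _ _ huv⟩
  obtain ⟨t, htu, htv, ht⟩ := hG.exists_adj_of_ne hau a.2
  have htX : (⟨t, htv⟩ : {w : V // w ≠ v}) ∈ X :=
    (hX (contractEdge_adj_merged huv.ne htu htv ht)).resolve_left hx
  refine ⟨⟨_, htX⟩, ?_⟩
  rcases ht with ht | ht
  · exact (reachable_induce_of_adj _ left_mem_uncontract ht.symm).trans
      (reachable_induce_of_adj _ _ huv)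
  · exact reachable_induce_of_adj _ _ ht.symm

theorem connected_induce_uncontract (hG : G.Connected) (huv : G.Adj u v)
    (hX : (contractEdge G u v).IsVertexCover X)
    (hXconn : ((contractEdge G u v).induce X).Connected) :
    (G.induce (uncontract u v X)).Connected := by
  refine (connected_iff_exists_forall_reachable _).2 ⟨⟨v, right_mem_uncontract⟩, ?_⟩
  rintro ⟨w, ⟨⟨a, ha, rfl⟩, hau⟩ | rfl | rfl⟩
  · obtain ⟨b, hb⟩ := exists_reachable_right_uncontract hG huv hX hau
    exact hb.symm.trans (reachable_uncontract_of_reachable huv (hXconn.preconnected b ⟨a, ha⟩))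
  · exact reachable_induce_of_adj _ _ huv.symm
  · rfl

end Uncontract

theorem stmt19_general {V : Type*} (G : SimpleGraph V) (hG : G.Connected)
    (u v : V) (huv : G.Adj u v)
    (X : Set {w : V // w ≠ v})
    (hXvc : ∀ a b : {w : V // w ≠ v}, (contractEdge G u v).Adj a b → a ∈ X ∨ b ∈ X)
    (hXconn : ((contractEdge G u v).induce X).Connected)
    (S : Set V) (hS : S = ((Subtype.val '' X) \ {u}) ∪ {u, v}) :
    (∀ a b : V, G.Adj a b → a ∈ S ∨ b ∈ S) ∧
    (G.induce S).Connected ∧ S.ncard ≤ X.ncard + 2 := by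
  have hX : (contractEdge G u v).IsVertexCover X := fun a b => hXvc a b
  subst hS
  exact ⟨fun _ _ h => isVertexCover_uncontract hX h,
    connected_induce_uncontract hG huv hX hXconn, ncard_uncontract_le⟩

/-- If `X` is a connected vertex cover of the contracted graph `G/e` (with `e = uv`
contracted onto the vertex `x` represented by `u`), then `(X \ {x}) ∪ {u, v}` is a
connected vertex cover of `G` of size at most `|X| + 2`, provided `u` or `v` has a
neighbour in `(X \ {x}) ∪ {u, v}` or `G` has at most two vertices. -/
theorem stmt19 {V : Type*} [Fintype V] (G : SimpleGraph V) (hG : G.Connected)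
    (u v : V) (huv : G.Adj u v)
    (X : Set {w : V // w ≠ v})
    (hXvc : ∀ a b : {w : V // w ≠ v}, (contractEdge G u v).Adj a b → a ∈ X ∨ b ∈ X)
    (hXconn : ((contractEdge G u v).induce X).Connected)
    (S : Set V) (hS : S = ((Subtype.val '' X) \ {u}) ∪ {u, v})
    (hprov : (∃ w ∈ S, G.Adj u w ∨ G.Adj v w) ∨ Fintype.card V ≤ 2) :
    (∀ a b : V, G.Adj a b → a ∈ S ∨ b ∈ S) ∧
    (G.induce S).Connected ∧ S.ncard ≤ X.ncard + 2 :=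
  stmt19_general G hG u v huv X hXvc hXconn S hS
end
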